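/- (Directional unique ergodicity, combinatorial form) For every word u in the language L(ζ) and every α ∈ (0,1), there exists a real number ν(u,α) with the following property: for every sequence (k_n) of natural numbers with k_n ≤ n for all n and k_n/n → α as n → ∞, the frequency of occurrences of u in the basic block B(n, k_n), namely a(u, B(n,k_n)) / C(n, k_n), converges to ν(u,α) as n → ∞. In particular the limiting frequency exists and depends only on the direction α, not on the particular sequence (k_n). -/

import Mathlib

open Filter

/-- The basic blocks of the Pascal triangle of words (`a = false`, `b = true`):
`B(n,0) = a`, `B(n,n) = b`, and `B(n,k) = B(n−1,k) ++ B(n−1,k−1)` for `0 < k < n`. -/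
def Bblk : ℕ → ℕ → List Bool
  | 0, _ => [true]
  | _ + 1, 0 => [false]
  | n + 1, k + 1 => if k + 1 = n + 1 then [true] else Bblk n (k + 1) ++ Bblk n k

/-- The number of occurrences of `u` in `w`. -/
def occ (u w : List Bool) : ℕ :=
  ((Finset.range (w.length - u.length + 1)).filter
    (fun i => (w.drop i).take u.length = u)).card

open Finset



lemma occ_pos_len {u x : List Bool} (hu : u ≠ []) {i : ℕ}
    (h : (x.drop i).take u.length = u) : i + u.length ≤ x.length := by
  have hlen := congrArg List.length h
  simp [List.length_take, List.length_drop] at hlen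
  have hm : 1 ≤ u.length := List.length_pos_iff.2 hu
  omega

lemma P_left {u v w : List Bool} {i : ℕ} (h : i + u.length ≤ v.length) :
    (((v ++ w).drop i).take u.length = u) ↔ ((v.drop i).take u.length = u) := by
  rw [List.drop_append_of_le_length (by omega), List.take_append_of_le_length]
  simp [List.length_drop]; omega

lemma P_right {u v w : List Bool} {i : ℕ} :
    (((v ++ w).drop (v.length + i)).take u.length = u) ↔ ((w.drop i).take u.length = u) := by
  rw [List.drop_append]
  simp
  rw [List.drop_eq_nil_of_le (by omega), List.nil_append]

lemma occ_append_ge (u v w : List Bool) (hu : u ≠ []) :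
    occ u v + occ u w ≤ occ u (v ++ w) := by
  classical
  set m := u.length with hm
  have hm1 : 1 ≤ m := List.length_pos_iff.2 hu
  set a := v.length
  set b := w.length
  set S1 := (Finset.range (a - m + 1)).filter (fun i => (v.drop i).take m = u) with hS1
  set S2 := ((Finset.range (b - m + 1)).filter (fun i => (w.drop i).take m = u)).image
      (fun i => a + i) with hS2
  have hsub : S1 ∪ S2 ⊆ (Finset.range (a + b - m + 1)).filter
      (fun i => ((v ++ w).drop i).take m = u) := by
    intro i hi
    rcases Finset.mem_union.1 hi with h | h
    · rw [hS1, Finset.mem_filter] at h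
      have hle : i + m ≤ a := occ_pos_len hu h.2
      refine Finset.mem_filter.2 ⟨Finset.mem_range.2 (by omega), ?_⟩
      exact (P_left hle).2 h.2
    · rw [hS2] at h
      rcases Finset.mem_image.1 h with ⟨j, hj, rfl⟩
      rw [Finset.mem_filter] at hj
      have hle : j + m ≤ b := occ_pos_len hu hj.2
      refine Finset.mem_filter.2 ⟨Finset.mem_range.2 (by omega), ?_⟩
      exact P_right.2 hj.2
  have hdisj : Disjoint S1 S2 := by
    rw [Finset.disjoint_left]
    intro i h1 h2
    rw [hS1, Finset.mem_filter] at h1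
    have : i + m ≤ a := occ_pos_len hu h1.2
    rw [hS2] at h2
    rcases Finset.mem_image.1 h2 with ⟨j, _, rfl⟩
    omega
  have hcard := Finset.card_le_card hsub
  rw [Finset.card_union_of_disjoint hdisj, Finset.card_image_of_injective _
    (add_right_injective a)] at hcard
  simpa [occ, List.length_append] using hcard

lemma occ_append_le (u v w : List Bool) (hu : u ≠ []) :
    occ u (v ++ w) ≤ occ u v + occ u w + (u.length - 1) := by
  classical
  set m := u.length with hm
  have hm1 : 1 ≤ m := List.length_pos_iff.2 hu
  set a := v.length
  set b := w.length
  set S1 := (Finset.range (a - m + 1)).filter (fun i => (v.drop i).take m = u) with hS1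
  set S2 := ((Finset.range (b - m + 1)).filter (fun i => (w.drop i).take m = u)).image
      (fun i => a + i) with hS2
  set T := Finset.Ico (a + 1 - m) a with hT
  have hsub : (Finset.range (a + b - m + 1)).filter
      (fun i => ((v ++ w).drop i).take m = u) ⊆ S1 ∪ S2 ∪ T := by
    intro i hi
    rw [Finset.mem_filter] at hi
    have hlen : i + m ≤ a + b := by
      have := occ_pos_len hu hi.2
      simpa [List.length_append] using this
    by_cases h1 : i + m ≤ a
    · refine Finset.mem_union.2 (Or.inl (Finset.mem_union.2 (Or.inl ?_)))
      exact Finset.mem_filter.2 ⟨Finset.mem_range.2 (by omega), (P_left h1).1 hi.2⟩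
    by_cases h2 : a ≤ i
    · refine Finset.mem_union.2 (Or.inl (Finset.mem_union.2 (Or.inr ?_)))
      refine Finset.mem_image.2 ⟨i - a, ?_, by omega⟩
      have heq : a + (i - a) = i := by omega
      refine Finset.mem_filter.2 ⟨Finset.mem_range.2 (by omega), ?_⟩
      have := hi.2
      rw [← heq] at this
      exact P_right.1 this
    · exact Finset.mem_union.2 (Or.inr (Finset.mem_Ico.2 (by omega)))
  have hcard := Finset.card_le_card hsub
  have hT_card : T.card ≤ m - 1 := by
    rw [hT, Nat.card_Ico]; omega
  have h2 := (Finset.card_union_le _ _).trans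
    (Nat.add_le_add (Finset.card_union_le S1 S2) hT_card)
  have := hcard.trans h2
  rw [Finset.card_image_of_injective _
    (add_right_injective a)] at this
  simpa [occ, List.length_append] using this


lemma Bblk_zero {n : ℕ} (h : 1 ≤ n) : Bblk n 0 = [false] := by
  cases n with
  | zero => omega
  | succ n => rfl

lemma Bblk_diag (n : ℕ) : Bblk n n = [true] := by
  cases n with
  | zero => rfl
  | succ n => simp [Bblk]

lemma Bblk_succ {n k : ℕ} (h : k + 1 ≠ n + 1) :
    Bblk (n + 1) (k + 1) = Bblk n (k + 1) ++ Bblk n k := by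
  simp [Bblk, h, show k ≠ n by omega]

lemma Bblk_length : ∀ n k, k ≤ n → (Bblk n k).length = n.choose k := by
  intro n
  induction n with
  | zero => intro k hk; interval_cases k; rfl
  | succ n ih =>
    intro k hk
    cases k with
    | zero => simp [Bblk]
    | succ k =>
      by_cases h : k + 1 = n + 1
      · have hk' : k = n := by omega
        subst hk'; rw [Bblk_diag]; simp
      · rw [Bblk_succ h, List.length_append, ih (k+1) (by omega), ih k (by omega),
          Nat.choose_succ_succ', Nat.add_comm]

section Decomp

variable (u : List Bool)

def Wt (d k j : ℕ) : ℕ := if j ≤ k then d.choose (k - j) else 0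

def Fc (n k : ℕ) : ℕ := occ u (Bblk n k)

lemma Wt_pascal {k : ℕ} (d j : ℕ) (hk : 1 ≤ k) :
    Wt (d + 1) k j = Wt d k j + Wt d (k - 1) j := by
  unfold Wt
  by_cases h1 : j ≤ k
  · by_cases h2 : j ≤ k - 1
    · have h3 : k - j = (k - 1 - j) + 1 := by omega
      have h4 : (k - 1) - j = k - 1 - j := rfl
      simp only [h1, h2, if_true, h3, Nat.choose_succ_succ']
      omega
    · have h3 : j = k := by omega
      subst h3
      simp [Nat.sub_self]
      omega
  · have h2 : ¬ j ≤ k - 1 := by omega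
    simp [h1, h2]

lemma sum_Wt0 {M k : ℕ} (hk : k ≤ M) (g : ℕ → ℕ) :
    ∑ j ∈ range (M + 1), Wt 0 k j * g j = g k := by
  rw [Finset.sum_eq_single_of_mem k (Finset.mem_range.2 (by omega))]
  · simp [Wt]
  · intro j _ hj
    unfold Wt
    by_cases h : j ≤ k
    · have : k - j ≠ 0 := by omega
      simp [h, Nat.choose_eq_zero_of_lt (by omega : 0 < k - j)]
    · simp [h]

lemma sum_Wt_zero {M : ℕ} (d : ℕ) (g : ℕ → ℕ) :
    ∑ j ∈ range (M + 1), Wt d 0 j * g j = g 0 := by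
  rw [Finset.sum_eq_single_of_mem 0 (Finset.mem_range.2 (by omega))]
  · simp [Wt]
  · intro j _ hj
    simp [Wt, hj]

lemma sum_Wt_top {M : ℕ} (d : ℕ) (g : ℕ → ℕ) :
    ∑ j ∈ range (M + 1), Wt d (M + d) j * g j = g M := by
  rw [Finset.sum_eq_single_of_mem M (Finset.mem_range.2 (by omega))]
  · simp [Wt]
  · intro j hj hjM
    have hj' : j ≤ M := Nat.lt_succ_iff.1 (Finset.mem_range.1 hj)
    have h1 : j ≤ M + d := by omega
    have h2 : d < M + d - j := by omega
    simp [Wt, h1, Nat.choose_eq_zero_of_lt h2]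

lemma sum_Wt0' {M k : ℕ} (hk : k ≤ M) :
    ∑ j ∈ range (M + 1), Wt 0 k j = 1 := by
  have := sum_Wt0 hk (fun _ => 1)
  simpa using this

lemma sum_Wt_zero' {M : ℕ} (d : ℕ) :
    ∑ j ∈ range (M + 1), Wt d 0 j = 1 := by
  have := sum_Wt_zero (M := M) d (fun _ => 1)
  simpa using this

lemma sum_Wt_top' {M : ℕ} (d : ℕ) :
    ∑ j ∈ range (M + 1), Wt d (M + d) j = 1 := by
  have := sum_Wt_top (M := M) d (fun _ => 1)
  simpa using this

lemma decomp (hu : u ≠ []) {M : ℕ} (hM : 1 ≤ M) :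
    ∀ d k, k ≤ M + d →
      (∑ j ∈ range (M + 1), Wt d k j * Fc u M j) ≤ Fc u (M + d) k ∧
      Fc u (M + d) k + (u.length - 1) ≤
        (∑ j ∈ range (M + 1), Wt d k j * Fc u M j) +
          (u.length - 1) * (∑ j ∈ range (M + 1), Wt d k j) := by
  intro d
  induction d with
  | zero =>
    intro k hk
    have hk' : k ≤ M := by omega
    have hFe : Fc u (M + 0) k = Fc u M k := rfl
    constructor
    · rw [sum_Wt0 hk', hFe]
    · rw [sum_Wt0 hk', sum_Wt0' hk', hFe]
      omega
  | succ d ih =>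
    intro k hk
    rcases Nat.eq_zero_or_pos k with hk0 | hkpos
    · subst hk0
      have hF : Fc u (M + (d + 1)) 0 = Fc u M 0 := by
        unfold Fc
        rw [Bblk_zero (by omega), Bblk_zero (by omega)]
      rw [sum_Wt_zero, sum_Wt_zero', hF]
      omega
    rcases Nat.lt_or_ge k (M + (d + 1)) with hklt | hkge
    · -- middle case
      obtain ⟨k', rfl⟩ : ∃ k', k = k' + 1 := ⟨k - 1, by omega⟩
      have hsplit : Bblk (M + (d + 1)) (k' + 1) = Bblk (M + d) (k' + 1) ++ Bblk (M + d) k' := by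
        have : M + (d + 1) = (M + d) + 1 := by omega
        rw [this]
        exact Bblk_succ (by omega)
      have ih1 := ih (k' + 1) (by omega)
      have ih2 := ih k' (by omega)
      have hWsum : ∀ g : ℕ → ℕ, ∑ j ∈ range (M + 1), Wt (d + 1) (k' + 1) j * g j
          = (∑ j ∈ range (M + 1), Wt d (k' + 1) j * g j)
            + (∑ j ∈ range (M + 1), Wt d k' j * g j) := by
        intro g
        rw [← Finset.sum_add_distrib]
        refine Finset.sum_congr rfl fun j _ => ?_
        rw [Wt_pascal d j (by omega : 1 ≤ k' + 1)]
        have : (k' + 1) - 1 = k' := by omega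
        rw [this]
        ring
      have hge := occ_append_ge u (Bblk (M + d) (k' + 1)) (Bblk (M + d) k') hu
      have hle := occ_append_le u (Bblk (M + d) (k' + 1)) (Bblk (M + d) k') hu
      constructor
      · rw [hWsum]
        calc _ ≤ Fc u (M + d) (k' + 1) + Fc u (M + d) k' :=
              Nat.add_le_add ih1.1 ih2.1
          _ ≤ Fc u (M + (d + 1)) (k' + 1) := by unfold Fc; rw [hsplit]; exact hge
      · have hW1 : ∑ j ∈ range (M + 1), Wt (d + 1) (k' + 1) j
            = (∑ j ∈ range (M + 1), Wt d (k' + 1) j)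
              + (∑ j ∈ range (M + 1), Wt d k' j) := by
          have := hWsum (fun _ => 1)
          simpa using this
        rw [hWsum, hW1]
        have h1 := ih1.2
        have h2 := ih2.2
        have h3 : Fc u (M + (d + 1)) (k' + 1) ≤
            Fc u (M + d) (k' + 1) + Fc u (M + d) k' + (u.length - 1) := by
          unfold Fc; rw [hsplit]; exact hle
        have hm1 : 1 ≤ u.length := List.length_pos_iff.2 hu
        -- combine
        nlinarith [h1, h2, h3]
    · -- top case k = M + d + 1
      have hkeq : k = M + (d + 1) := by omega
      subst hkeq
      have hF : Fc u (M + (d + 1)) (M + (d + 1)) = Fc u M M := by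
        unfold Fc
        rw [Bblk_diag, Bblk_diag]
      rw [sum_Wt_top, sum_Wt_top', hF]
      omega

end Decomp

section Analysis

lemma choose_ratio1 {s t : ℕ} (hs : 1 ≤ s) (ht : t ≤ s - 1) :
    (((s - 1).choose t : ℕ) : ℝ) = ((s.choose t : ℕ) : ℝ) * (((s : ℝ) - t) / s) := by
  have hid : (s - 1).choose t * s = s.choose t * (s - t) := by
    have := Nat.choose_mul_succ_eq (s - 1) t
    rw [show s - 1 + 1 = s by omega] at this
    omega
  have hidR : (((s - 1).choose t : ℕ) : ℝ) * (s : ℝ)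
      = ((s.choose t : ℕ) : ℝ) * (((s - t : ℕ)) : ℝ) := by
    exact_mod_cast congrArg (fun x : ℕ => (x : ℝ)) hid
  have hts : t ≤ s := by omega
  rw [Nat.cast_sub hts] at hidR
  have hsne : (s : ℝ) ≠ 0 := by
    have : (0:ℝ) < s := by exact_mod_cast hs
    linarith
  field_simp
  linarith

lemma choose_ratio2 {s t : ℕ} (hs : 1 ≤ s) (ht1 : 1 ≤ t) (hts : t ≤ s) :
    (((s - 1).choose (t - 1) : ℕ) : ℝ) = ((s.choose t : ℕ) : ℝ) * ((t : ℝ) / s) := by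
  have hid : s * (s - 1).choose (t - 1) = s.choose t * t := by
    have := Nat.add_one_mul_choose_eq (s - 1) (t - 1)
    rw [show s - 1 + 1 = s by omega, show t - 1 + 1 = t by omega] at this
    omega
  have hidR : (s : ℝ) * (((s - 1).choose (t - 1) : ℕ) : ℝ)
      = ((s.choose t : ℕ) : ℝ) * (t : ℝ) := by
    exact_mod_cast congrArg (fun x : ℕ => (x : ℝ)) hid
  have hsne : (s : ℝ) ≠ 0 := by
    have : (0:ℝ) < s := by exact_mod_cast hs
    linarith
  field_simp
  linarith

variable {α : ℝ} (hα0 : 0 < α) (hα1 : α < 1)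
variable {k : ℕ → ℕ} (hk : ∀ n, k n ≤ n)
variable (hlim : Filter.Tendsto (fun n : ℕ => (k n : ℝ) / (n : ℝ)) atTop (nhds α))

include hα0 hα1 hlim in
lemma event_k (c : ℕ) : ∀ᶠ n in atTop, c ≤ k n ∧ k n + c ≤ n := by
  set ε := min α (1 - α) / 2 with hε
  have hεpos : 0 < ε := by
    have : 0 < min α (1 - α) := lt_min hα0 (by linarith)
    positivity
  have hαε : 0 < α - ε := by
    have h1 : ε ≤ α / 2 := by
      rw [hε]; have := min_le_left α (1 - α); linarith
    linarith
  have hβε : 0 < 1 - α - ε := by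
    have h1 : ε ≤ (1 - α) / 2 := by
      rw [hε]; have := min_le_right α (1 - α); linarith
    linarith
  obtain ⟨N1, hN1⟩ := exists_nat_gt ((c : ℝ) / (α - ε))
  obtain ⟨N2, hN2⟩ := exists_nat_gt ((c : ℝ) / (1 - α - ε))
  have h1 : ∀ᶠ n in atTop, dist ((k n : ℝ) / (n : ℝ)) α < ε :=
    Metric.tendsto_nhds.mp hlim ε hεpos
  filter_upwards [h1, eventually_ge_atTop (max (max N1 N2) 1)] with n hd hn
  have hn1 : 1 ≤ n := le_trans (le_max_right _ _) hn
  have hnN1 : (N1 : ℝ) ≤ n := by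
    exact_mod_cast le_trans (le_trans (le_max_left _ _) (le_max_left _ _)) hn
  have hnN2 : (N2 : ℝ) ≤ n := by
    exact_mod_cast le_trans (le_trans (le_max_right _ _) (le_max_left _ _)) hn
  have hnpos : (0 : ℝ) < n := by exact_mod_cast hn1
  rw [Real.dist_eq, abs_lt] at hd
  have hklow : (α - ε) * n < (k n : ℝ) := by
    have h := hd.1
    have h2 : α - ε < (k n : ℝ) / n := by linarith
    exact (lt_div_iff₀ hnpos).mp h2
  have hkhigh : (k n : ℝ) < (α + ε) * n := by
    have h := hd.2
    have h2 : (k n : ℝ) / n < α + ε := by linarith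
    exact (div_lt_iff₀ hnpos).mp h2
  have hc1 : (c : ℝ) < (α - ε) * N1 := by
    rw [div_lt_iff₀ hαε] at hN1
    nlinarith
  have hc2 : (c : ℝ) < (1 - α - ε) * N2 := by
    rw [div_lt_iff₀ hβε] at hN2
    nlinarith
  constructor
  · have : (c : ℝ) < (k n : ℝ) := by nlinarith
    exact_mod_cast this.le
  · have : (k n : ℝ) + c < n := by nlinarith
    exact_mod_cast this.le

include hα0 hα1 hk hlim in
lemma tendsto_ratio_aux (j m : ℕ) :
    Tendsto (fun n : ℕ => ((k n : ℝ) - (j : ℝ)) / ((n : ℝ) - (m : ℝ))) atTop (nhds α) := by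
  have h1 : Tendsto (fun n : ℕ => ((k n : ℝ) / n - (j : ℝ) / n) / (1 - (m : ℝ) / n))
      atTop (nhds ((α - 0) / (1 - 0))) := by
    apply Tendsto.div
    · exact hlim.sub (tendsto_const_div_atTop_nhds_zero_nat (j : ℝ))
    · exact (tendsto_const_nhds (x := (1:ℝ))).sub (tendsto_const_div_atTop_nhds_zero_nat (m : ℝ))
    · norm_num
  simp only [sub_zero, div_one] at h1
  apply h1.congr'
  filter_upwards [eventually_ge_atTop (m + 1)] with n hn
  have hnpos : (0 : ℝ) < n := by exact_mod_cast (by omega : 0 < n)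
  have hnm : (m : ℝ) < n := by exact_mod_cast (by omega : m < n)
  field_simp

include hα0 hα1 hk hlim in
lemma ratio_lim : ∀ m, ∀ j, j ≤ m →
    Tendsto (fun n : ℕ => (((n - m).choose (k n - j) : ℕ) : ℝ) / ((n.choose (k n) : ℕ) : ℝ))
      atTop (nhds (α ^ j * (1 - α) ^ (m - j))) := by
  intro m
  induction m with
  | zero =>
    intro j hj
    interval_cases j
    simp only [pow_zero, Nat.sub_zero, one_mul]
    apply Tendsto.congr' _ (tendsto_const_nhds (x := (1:ℝ)))
    filter_upwards [] with n
    have hpos : 0 < n.choose (k n) := Nat.choose_pos (hk n)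
    rw [eq_comm, div_self (by exact_mod_cast hpos.ne')]
  | succ m ih =>
    intro j hj
    have hev := event_k hα0 hα1 hlim (m + j + 2)
    rcases Nat.eq_zero_or_pos j with rfl | hjpos
    · have hIH := ih 0 (Nat.zero_le m)
      have haux := tendsto_ratio_aux hα0 hα1 hk hlim 0 m
      have hmul := ((tendsto_const_nhds (x := (1:ℝ))).sub haux).mul hIH
      have heq : α ^ 0 * (1 - α) ^ (m + 1 - 0)
          = (1 - α) * (α ^ 0 * (1 - α) ^ (m - 0)) := by
        simp only [pow_zero, Nat.sub_zero, one_mul]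
        rw [pow_succ]
        ring
      rw [heq]
      apply Tendsto.congr' _ hmul
      filter_upwards [hev] with n hn
      obtain ⟨hn1, hn2⟩ := hn
      set s := n - m with hsdef
      have hs1 : 1 ≤ s := by omega
      have hts : k n - 0 ≤ s - 1 := by omega
      have h1 : n - (m + 1) = s - 1 := by omega
      rw [h1, choose_ratio1 hs1 hts]
      have hc1 : ((s : ℕ) : ℝ) = (n : ℝ) - (m : ℝ) := by
        rw [hsdef, Nat.cast_sub (by omega : m ≤ n)]
      have hc2 : ((k n - 0 : ℕ) : ℝ) = (k n : ℝ) - ((0:ℕ) : ℝ) := by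
        simp
      rw [hc1, hc2]
      have hbne : (n : ℝ) - (m : ℝ) ≠ 0 := by
        have : (m : ℝ) < n := by exact_mod_cast (by omega : m < n)
        linarith
      field_simp
    · obtain ⟨j', rfl⟩ : ∃ j', j = j' + 1 := ⟨j - 1, by omega⟩
      have hIH := ih j' (by omega)
      have haux := tendsto_ratio_aux hα0 hα1 hk hlim j' m
      have hmul := haux.mul hIH
      have heq : α ^ (j' + 1) * (1 - α) ^ (m + 1 - (j' + 1))
          = α * (α ^ j' * (1 - α) ^ (m - j')) := by
        rw [pow_succ, show m + 1 - (j' + 1) = m - j' by omega]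
        ring
      rw [heq]
      apply Tendsto.congr' _ hmul
      filter_upwards [hev] with n hn
      obtain ⟨hn1, hn2⟩ := hn
      set s := n - m with hsdef
      set t := k n - j' with htdef
      have hs1 : 1 ≤ s := by omega
      have ht1 : 1 ≤ t := by omega
      have hts : t ≤ s := by omega
      have h1 : n - (m + 1) = s - 1 := by omega
      have h2 : k n - (j' + 1) = t - 1 := by omega
      rw [h1, h2, choose_ratio2 hs1 ht1 hts]
      have hc1 : ((s : ℕ) : ℝ) = (n : ℝ) - (m : ℝ) := by
        rw [hsdef, Nat.cast_sub (by omega : m ≤ n)]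
      have hc2 : ((t : ℕ) : ℝ) = (k n : ℝ) - (j' : ℝ) := by
        rw [htdef, Nat.cast_sub (by omega : j' ≤ k n)]
      rw [hc1, hc2]
      ring

end Analysis

section Tseq

variable (u : List Bool) (α : ℝ)

noncomputable def tseq (M : ℕ) : ℝ :=
  ∑ j ∈ range (M + 1), α ^ j * (1 - α) ^ (M - j) * (Fc u M j : ℝ)

lemma tseq_diff (hu : u ≠ []) (hα0 : 0 < α) (hα1 : α < 1) {M : ℕ} (hM : 1 ≤ M) :
    |tseq u α (M + 1) - tseq u α M| ≤
      (u.length : ℝ) * ((M + 2) * (max α (1 - α)) ^ (M + 1)) := by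
  set β := 1 - α with hβ
  set ρ := max α β with hρ
  have hβ0 : 0 < β := by rw [hβ]; linarith
  have hρ0 : 0 < ρ := lt_max_of_lt_left hα0
  set H : ℕ → ℝ := fun kk =>
    (if kk ≤ M then (Fc u M kk : ℝ) else 0) + (if 1 ≤ kk then (Fc u M (kk - 1) : ℝ) else 0)
    with hH
  have step1 : ∑ kk ∈ range (M + 2), α ^ kk * β ^ (M + 1 - kk) * H kk = tseq u α M := by
    have hsplit : ∑ kk ∈ range (M + 2), α ^ kk * β ^ (M + 1 - kk) * H kk
        = (∑ kk ∈ range (M + 2), α ^ kk * β ^ (M + 1 - kk) *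
            (if kk ≤ M then (Fc u M kk : ℝ) else 0))
          + (∑ kk ∈ range (M + 2), α ^ kk * β ^ (M + 1 - kk) *
            (if 1 ≤ kk then (Fc u M (kk - 1) : ℝ) else 0)) := by
      rw [← Finset.sum_add_distrib]
      refine Finset.sum_congr rfl fun kk _ => ?_
      rw [hH]; ring
    rw [hsplit]
    have hT1 : ∑ kk ∈ range (M + 2), α ^ kk * β ^ (M + 1 - kk) *
        (if kk ≤ M then (Fc u M kk : ℝ) else 0) = β * tseq u α M := by
      rw [Finset.sum_range_succ]
      simp only [show ¬ (M + 1 ≤ M) by omega, if_false, mul_zero, add_zero]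
      rw [tseq, Finset.mul_sum]
      refine Finset.sum_congr rfl fun kk hkk => ?_
      have hkkM : kk ≤ M := Nat.lt_succ_iff.1 (Finset.mem_range.1 hkk)
      rw [if_pos hkkM, show M + 1 - kk = (M - kk) + 1 by omega, pow_succ]
      ring
    have hT2 : ∑ kk ∈ range (M + 2), α ^ kk * β ^ (M + 1 - kk) *
        (if 1 ≤ kk then (Fc u M (kk - 1) : ℝ) else 0) = α * tseq u α M := by
      rw [Finset.sum_range_succ']
      simp only [show ¬ (1 ≤ 0) by omega, if_false, mul_zero, add_zero]
      rw [tseq, Finset.mul_sum]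
      refine Finset.sum_congr rfl fun kk hkk => ?_
      simp only [show 1 ≤ kk + 1 by omega, if_true, Nat.add_sub_cancel]
      rw [show M + 1 - (kk + 1) = M - kk by omega, pow_succ]
      ring
    rw [hT1, hT2]
    ring
  have step2 : ∀ kk ≤ M + 1, |(Fc u (M + 1) kk : ℝ) - H kk| ≤ ((u.length - 1 : ℕ) : ℝ) := by
    intro kk hkk
    rcases Nat.eq_zero_or_pos kk with rfl | hkk1
    · have h0 : Fc u (M + 1) 0 = Fc u M 0 := by
        unfold Fc; rw [Bblk_zero (by omega), Bblk_zero (by omega)]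
      rw [hH]
      simp [h0]
    rcases Nat.lt_or_ge kk (M + 1) with hkklt | hkkge
    · -- 1 ≤ kk ≤ M
      obtain ⟨kk', rfl⟩ : ∃ kk', kk = kk' + 1 := ⟨kk - 1, by omega⟩
      have hsp : Bblk (M + 1) (kk' + 1) = Bblk M (kk' + 1) ++ Bblk M kk' :=
        Bblk_succ (by omega)
      have hge := occ_append_ge u (Bblk M (kk' + 1)) (Bblk M kk') hu
      have hle := occ_append_le u (Bblk M (kk' + 1)) (Bblk M kk') hu
      rw [hH]
      simp only [show kk' + 1 ≤ M by omega, if_true, show 1 ≤ kk' + 1 by omega,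
        Nat.add_sub_cancel]
      have h1 : Fc u M (kk' + 1) + Fc u M kk' ≤ Fc u (M + 1) (kk' + 1) := by
        unfold Fc; rw [hsp]; exact hge
      have h2 : Fc u (M + 1) (kk' + 1) ≤ Fc u M (kk' + 1) + Fc u M kk' + (u.length - 1) := by
        unfold Fc; rw [hsp]; exact hle
      rw [abs_le]
      constructor
      · have := (Nat.cast_le (α := ℝ)).2 h1
        push_cast at this ⊢
        linarith
      · have := (Nat.cast_le (α := ℝ)).2 h2
        push_cast at this ⊢
        linarith
    · have hkeq : kk = M + 1 := by omega
      subst hkeq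
      have h0 : Fc u (M + 1) (M + 1) = Fc u M M := by
        unfold Fc; rw [Bblk_diag, Bblk_diag]
      rw [hH]
      simp only [show ¬ (M + 1 ≤ M) by omega, if_false, show 1 ≤ M + 1 by omega, if_true,
        Nat.add_sub_cancel, h0, zero_add, sub_self, abs_zero]
      positivity
  -- step 3
  have hsum : tseq u α (M + 1) - tseq u α M
      = ∑ kk ∈ range (M + 2), α ^ kk * β ^ (M + 1 - kk) * ((Fc u (M + 1) kk : ℝ) - H kk) := by
    rw [← step1, tseq]
    rw [← Finset.sum_sub_distrib]
    refine Finset.sum_congr rfl fun kk _ => ?_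
    ring
  rw [hsum]
  calc |∑ kk ∈ range (M + 2), α ^ kk * β ^ (M + 1 - kk) * ((Fc u (M + 1) kk : ℝ) - H kk)|
      ≤ ∑ kk ∈ range (M + 2), |α ^ kk * β ^ (M + 1 - kk) * ((Fc u (M + 1) kk : ℝ) - H kk)| :=
        Finset.abs_sum_le_sum_abs _ _
    _ ≤ ∑ kk ∈ range (M + 2), ρ ^ (M + 1) * ((u.length - 1 : ℕ) : ℝ) := by
        refine Finset.sum_le_sum fun kk hkk => ?_
        have hkkM : kk ≤ M + 1 := Nat.lt_succ_iff.1 (Finset.mem_range.1 hkk)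
        rw [abs_mul]
        have hw : |α ^ kk * β ^ (M + 1 - kk)| ≤ ρ ^ (M + 1) := by
          rw [abs_of_nonneg (by positivity)]
          have h1 : α ^ kk ≤ ρ ^ kk := pow_le_pow_left₀ hα0.le (le_max_left _ _) kk
          have h2 : β ^ (M + 1 - kk) ≤ ρ ^ (M + 1 - kk) :=
            pow_le_pow_left₀ hβ0.le (le_max_right _ _) _
          calc α ^ kk * β ^ (M + 1 - kk) ≤ ρ ^ kk * ρ ^ (M + 1 - kk) := by
                apply mul_le_mul h1 h2 (by positivity) (by positivity)
            _ = ρ ^ (M + 1) := by rw [← pow_add]; congr 1; omega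
        exact mul_le_mul hw (step2 kk hkkM) (abs_nonneg _) (by positivity)
    _ = (M + 2) * (ρ ^ (M + 1) * ((u.length - 1 : ℕ) : ℝ)) := by
        rw [Finset.sum_const, Finset.card_range]
        push_cast
        ring
    _ = (((M:ℝ) + 2) * ρ ^ (M + 1)) * ((u.length - 1 : ℕ) : ℝ) := by ring
    _ ≤ (((M:ℝ) + 2) * ρ ^ (M + 1)) * (u.length : ℝ) := by
        apply mul_le_mul_of_nonneg_left (by exact_mod_cast Nat.sub_le _ _) (by positivity)
    _ = (u.length : ℝ) * ((M + 2) * ρ ^ (M + 1)) := by ring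

lemma tseq_conv (hu : u ≠ []) (hα0 : 0 < α) (hα1 : α < 1) :
    ∃ ν : ℝ, Tendsto (fun M => tseq u α (M + 1)) atTop (nhds ν) := by
  set ρ := max α (1 - α) with hρ
  have hρ0 : 0 < ρ := lt_max_of_lt_left hα0
  have hρ1 : ρ < 1 := max_lt hα1 (by linarith)
  have hsum : Summable (fun M : ℕ =>
      (u.length : ℝ) * (((M:ℝ) + 3) * ρ ^ (M + 2))) := by
    apply Summable.mul_left
    have h1 : Summable (fun M : ℕ => ((M:ℝ) ^ 1) * ρ ^ M) :=
      summable_pow_mul_geometric_of_norm_lt_one 1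
        (by rw [Real.norm_eq_abs, abs_of_pos hρ0]; exact hρ1)
    have h2 : Summable (fun M : ℕ => (3:ℝ) * ρ ^ M) :=
      (summable_geometric_of_lt_one hρ0.le hρ1).mul_left 3
    have h3 : Summable (fun M : ℕ => (((M:ℝ) + 3) * ρ ^ M)) := by
      have := h1.add h2
      apply this.congr
      intro M
      ring
    have := h3.mul_left (ρ ^ 2)
    apply this.congr
    intro M
    rw [pow_add]
    ring
  have hcauchy : CauchySeq (fun M => tseq u α (M + 1)) := by
    apply cauchySeq_of_summable_dist
    apply Summable.of_nonneg_of_le (fun M => dist_nonneg) _ hsum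
    intro M
    rw [Real.dist_eq]
    have := tseq_diff u α hu hα0 hα1 (M := M + 1) (by omega)
    rw [abs_sub_comm]
    calc |tseq u α (M + 1 + 1) - tseq u α (M + 1)|
        ≤ (u.length : ℝ) * ((((M + 1 : ℕ):ℝ) + 2) * ρ ^ (M + 1 + 1)) := this
      _ = (u.length : ℝ) * (((M:ℝ) + 3) * ρ ^ (M + 2)) := by
          push_cast
          ring
  exact cauchySeq_tendsto_of_complete hcauchy

end Tseq

section Assemble

variable {α : ℝ} (hα0 : 0 < α) (hα1 : α < 1)
variable {k : ℕ → ℕ} (hk : ∀ n, k n ≤ n)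
variable (hlim : Filter.Tendsto (fun n : ℕ => (k n : ℝ) / (n : ℝ)) atTop (nhds α))

include hα0 hα1 hk hlim in
lemma AW_lim (M : ℕ) (g : ℕ → ℕ) :
    Tendsto (fun n : ℕ =>
        ((∑ j ∈ range (M + 1), Wt (n - M) (k n) j * g j : ℕ) : ℝ) / (n.choose (k n) : ℝ))
      atTop (nhds (∑ j ∈ range (M + 1), α ^ j * (1 - α) ^ (M - j) * (g j : ℝ))) := by
  have base : Tendsto (fun n : ℕ =>
      ∑ j ∈ range (M + 1), (((n - M).choose (k n - j) : ℕ) : ℝ) / (n.choose (k n) : ℝ) * (g j : ℝ))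
      atTop (nhds (∑ j ∈ range (M + 1), α ^ j * (1 - α) ^ (M - j) * (g j : ℝ))) := by
    apply tendsto_finset_sum
    intro j hj
    have hjM : j ≤ M := Nat.lt_succ_iff.1 (Finset.mem_range.1 hj)
    exact (ratio_lim hα0 hα1 hk hlim M j hjM).mul_const _
  apply Tendsto.congr' _ base
  filter_upwards [event_k hα0 hα1 hlim M] with n hn
  obtain ⟨hn1, hn2⟩ := hn
  rw [eq_comm]
  push_cast
  rw [Finset.sum_div]
  refine Finset.sum_congr rfl fun j hj => ?_
  have hjM : j ≤ M := Nat.lt_succ_iff.1 (Finset.mem_range.1 hj)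
  have hW : Wt (n - M) (k n) j = (n - M).choose (k n - j) := by
    unfold Wt
    rw [if_pos (by omega : j ≤ k n)]
  rw [hW]
  ring

include hα0 hα1 in
lemma sseq_le (M : ℕ) :
    ∑ j ∈ range (M + 1), α ^ j * (1 - α) ^ (M - j)
      ≤ ((M : ℝ) + 1) * (max α (1 - α)) ^ M := by
  set β := 1 - α with hβ
  set ρ := max α β with hρ
  have hβ0 : 0 < β := by rw [hβ]; linarith
  calc ∑ j ∈ range (M + 1), α ^ j * β ^ (M - j)
      ≤ ∑ j ∈ range (M + 1), ρ ^ M := by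
        refine Finset.sum_le_sum fun j hj => ?_
        have hjM : j ≤ M := Nat.lt_succ_iff.1 (Finset.mem_range.1 hj)
        have h1 : α ^ j ≤ ρ ^ j := pow_le_pow_left₀ hα0.le (le_max_left _ _) j
        have h2 : β ^ (M - j) ≤ ρ ^ (M - j) := pow_le_pow_left₀ hβ0.le (le_max_right _ _) _
        calc α ^ j * β ^ (M - j) ≤ ρ ^ j * ρ ^ (M - j) :=
              mul_le_mul h1 h2 (by positivity) (by positivity)
          _ = ρ ^ M := by rw [← pow_add]; congr 1; omega
    _ = ((M : ℝ) + 1) * ρ ^ M := by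
        rw [Finset.sum_const, Finset.card_range]
        push_cast
        ring

end Assemble

lemma n_le_choose : ∀ n kk : ℕ, 1 ≤ kk → kk + 1 ≤ n → n ≤ n.choose kk := by
  intro n
  induction n with
  | zero => intro kk h1 h2; omega
  | succ n ih =>
    intro kk h1 h2
    rcases eq_or_ne kk n with rfl | hne
    · rw [Nat.choose_succ_self_right]
    rcases eq_or_ne kk 1 with rfl | hne1
    · rw [Nat.choose_one_right]
    · have hkk2 : 2 ≤ kk := by omega
      have hkkn : kk + 1 ≤ n := by omega
      have hch : (n + 1).choose ((kk - 1) + 1) = n.choose (kk - 1) + n.choose ((kk - 1) + 1) :=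
        Nat.choose_succ_succ n (kk - 1)
      rw [show (kk - 1) + 1 = kk by omega] at hch
      have hpos : 0 < n.choose (kk - 1) := Nat.choose_pos (by omega)
      have := ih kk h1 hkkn
      omega

/-- Directional unique ergodicity (combinatorial form): for every word `u` of
the language and every direction `α ∈ (0,1)` there is a number `ν` such that
for every sequence `kₙ ≤ n` with `kₙ/n → α`, the frequency
`a(u, B(n,kₙ)) / C(n,kₙ)` converges to `ν`. -/
theorem directional_unique_ergodicity (u : List Bool)
    (hu : ∃ n k, 1 ≤ n ∧ k ≤ n ∧ u <:+: Bblk n k)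
    (α : ℝ) (hα0 : 0 < α) (hα1 : α < 1) :
    ∃ ν : ℝ, ∀ k : ℕ → ℕ, (∀ n, k n ≤ n) →
      Tendsto (fun n : ℕ => (k n : ℝ) / (n : ℝ)) atTop (nhds α) →
      Tendsto (fun n : ℕ => (occ u (Bblk n (k n)) : ℝ) / (Nat.choose n (k n) : ℝ))
        atTop (nhds ν) := by
  clear hu
  rcases eq_or_ne u [] with rfl | hune
  · -- empty word: limit 1
    refine ⟨1, ?_⟩
    intro k hk hlim
    have hocc : ∀ n, occ [] (Bblk n (k n)) = n.choose (k n) + 1 := by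
      intro n
      unfold occ
      rw [Finset.filter_true_of_mem (fun i _ => by simp), Finset.card_range,
        Bblk_length n (k n) (hk n)]
      simp
    have hzero : Tendsto (fun n : ℕ => 1 / ((n.choose (k n) : ℕ) : ℝ)) atTop (nhds 0) := by
      apply squeeze_zero' (f := fun n : ℕ => 1 / ((n.choose (k n) : ℕ) : ℝ))
        (g := fun n : ℕ => 1 / (n : ℝ))
      · filter_upwards [] with n
        positivity
      · filter_upwards [event_k hα0 hα1 hlim 1, eventually_ge_atTop 1] with n hn hn1
        obtain ⟨ha, hb⟩ := hn
        have hch : n ≤ n.choose (k n) := n_le_choose n (k n) ha (by omega)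
        have h1 : (0:ℝ) < n := by exact_mod_cast hn1
        have h2 : (n:ℝ) ≤ (n.choose (k n) : ℝ) := by exact_mod_cast hch
        apply one_div_le_one_div_of_le h1 h2
      · exact tendsto_one_div_atTop_nhds_zero_nat
    have hfin := (tendsto_const_nhds (x := (1:ℝ))).add hzero
    rw [add_zero] at hfin
    apply Tendsto.congr' _ hfin
    filter_upwards [] with n
    rw [hocc n]
    have hpos : 0 < n.choose (k n) := Nat.choose_pos (hk n)
    have hne : ((n.choose (k n) : ℕ) : ℝ) ≠ 0 := by
      exact_mod_cast hpos.ne'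
    push_cast
    field_simp
  · -- nonempty word
    obtain ⟨ν, hν⟩ := tseq_conv u α hune hα0 hα1
    refine ⟨ν, ?_⟩
    intro k hk hlim
    rw [Metric.tendsto_nhds]
    intro ε hε
    set ρ := max α (1 - α) with hρ
    have hρ0 : 0 < ρ := lt_max_of_lt_left hα0
    have hρ1 : ρ < 1 := max_lt hα1 (by linarith)
    set L : ℝ := ((u.length - 1 : ℕ) : ℝ) with hL
    have hL0 : 0 ≤ L := by positivity
    have hB : Tendsto (fun M : ℕ => L * (((M:ℝ) + 1) * ρ ^ M)) atTop (nhds 0) := by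
      have h1 : Summable (fun M : ℕ => ((M:ℝ) ^ 1) * ρ ^ M) :=
        summable_pow_mul_geometric_of_norm_lt_one 1
          (by rw [Real.norm_eq_abs, abs_of_pos hρ0]; exact hρ1)
      have h2 : Summable (fun M : ℕ => (1:ℝ) * ρ ^ M) :=
        (summable_geometric_of_lt_one hρ0.le hρ1).mul_left 1
      have h3 : Summable (fun M : ℕ => (((M:ℝ) + 1) * ρ ^ M)) := by
        apply (h1.add h2).congr
        intro M; ring
      exact (h3.mul_left L).tendsto_atTop_zero
    have ev1 : ∀ᶠ M in atTop, dist (tseq u α (M + 1)) ν < ε / 4 :=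
      Metric.tendsto_nhds.mp hν (ε / 4) (by positivity)
    have ev2 : ∀ᶠ M : ℕ in atTop, L * (((M:ℝ) + 1) * ρ ^ M) < ε / 8 :=
      hB.eventually_lt_const (by positivity)
    have ev2' : ∀ᶠ M : ℕ in atTop, L * ((((M+1:ℕ):ℝ) + 1) * ρ ^ (M+1)) < ε / 8 :=
      (tendsto_add_atTop_nat 1).eventually ev2
    obtain ⟨M0, hM1, hM2⟩ := (ev1.and ev2').exists
    set M := M0 + 1 with hMdef
    have hM : 1 ≤ M := by omega
    have hA := AW_lim hα0 hα1 hk hlim M (Fc u M)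
    have hN := AW_lim hα0 hα1 hk hlim M (fun _ => 1)
    have hNval : (∑ j ∈ range (M + 1), α ^ j * (1 - α) ^ (M - j) * (((1:ℕ)) : ℝ))
        = ∑ j ∈ range (M + 1), α ^ j * (1 - α) ^ (M - j) := by
      refine Finset.sum_congr rfl fun j _ => by simp
    rw [hNval] at hN
    have hNbound : L * (∑ j ∈ range (M + 1), α ^ j * (1 - α) ^ (M - j)) < ε / 4 := by
      have h1 := sseq_le hα0 hα1 M
      calc L * (∑ j ∈ range (M + 1), α ^ j * (1 - α) ^ (M - j))
          ≤ L * (((M:ℝ) + 1) * ρ ^ M) := mul_le_mul_of_nonneg_left h1 hL0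
        _ = L * ((((M0+1:ℕ):ℝ) + 1) * ρ ^ (M0+1)) := by rw [hMdef]
        _ < ε / 8 := hM2
        _ < ε / 4 := by linarith
    have evE : ∀ᶠ n in atTop,
        L * (((∑ j ∈ range (M + 1), Wt (n - M) (k n) j * 1 : ℕ) : ℝ) / (n.choose (k n) : ℝ))
          < ε / 4 :=
      ((hN.const_mul L).eventually_lt_const hNbound)
    have evA : ∀ᶠ n in atTop,
        dist (((∑ j ∈ range (M + 1), Wt (n - M) (k n) j * Fc u M j : ℕ) : ℝ)
          / (n.choose (k n) : ℝ)) (tseq u α M) < ε / 4 :=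
      Metric.tendsto_nhds.mp hA (ε / 4) (by positivity)
    filter_upwards [evE, evA, eventually_ge_atTop M] with n hE hAd hnM
    have hdec := decomp u hune hM (n - M) (k n) (by have := hk n; omega)
    rw [show M + (n - M) = n by omega] at hdec
    set S : ℕ := ∑ j ∈ range (M + 1), Wt (n - M) (k n) j * Fc u M j with hSdef
    set N : ℕ := ∑ j ∈ range (M + 1), Wt (n - M) (k n) j * 1 with hNdef
    have hNeq : (∑ j ∈ range (M + 1), Wt (n - M) (k n) j) = N := by
      rw [hNdef]; refine Finset.sum_congr rfl fun j _ => by ring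
    have hlow : S ≤ Fc u n (k n) := hdec.1
    have hhigh : Fc u n (k n) ≤ S + (u.length - 1) * N := by
      have h := hdec.2
      rw [hNeq] at h
      omega
    have hCpos : (0:ℝ) < (n.choose (k n) : ℝ) := by
      exact_mod_cast Nat.choose_pos (hk n)
    -- real inequalities
    have hlowR : (S : ℝ) / (n.choose (k n) : ℝ) ≤ (Fc u n (k n) : ℝ) / (n.choose (k n) : ℝ) := by
      exact (div_le_div_iff_of_pos_right hCpos).2 (by exact_mod_cast hlow)
    have hhighR : (Fc u n (k n) : ℝ) / (n.choose (k n) : ℝ)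
        ≤ (S : ℝ) / (n.choose (k n) : ℝ) + L * ((N : ℝ) / (n.choose (k n) : ℝ)) := by
      have h1 : (Fc u n (k n) : ℝ) ≤ (S : ℝ) + L * (N : ℝ) := by
        rw [hL]
        exact_mod_cast hhigh
      calc (Fc u n (k n) : ℝ) / (n.choose (k n) : ℝ)
          ≤ ((S : ℝ) + L * (N : ℝ)) / (n.choose (k n) : ℝ) := by
            exact (div_le_div_iff_of_pos_right hCpos).2 h1
        _ = (S : ℝ) / (n.choose (k n) : ℝ) + L * ((N : ℝ) / (n.choose (k n) : ℝ)) := by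
            field_simp
    -- conclude
    rw [Real.dist_eq] at hAd ⊢
    have hdist : |(Fc u n (k n) : ℝ) / (n.choose (k n) : ℝ)
        - (S : ℝ) / (n.choose (k n) : ℝ)| ≤ L * ((N : ℝ) / (n.choose (k n) : ℝ)) := by
      rw [abs_le]
      constructor
      · have hEnn : 0 ≤ L * ((N : ℝ) / (n.choose (k n) : ℝ)) := by positivity
        linarith
      · linarith
    have hM1' : |tseq u α M - ν| < ε / 4 := by
      rw [hMdef]
      rw [Real.dist_eq] at hM1
      exact hM1
    have t1 := abs_sub_le ((Fc u n (k n) : ℝ) / (n.choose (k n) : ℝ))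
      ((S : ℝ) / (n.choose (k n) : ℝ)) ν
    have t2 := abs_sub_le ((S : ℝ) / (n.choose (k n) : ℝ)) (tseq u α M) ν
    show |(Fc u n (k n) : ℝ) / (n.choose (k n) : ℝ) - ν| < ε
    linarith [hdist, hAd, hM1', hE, t1, t2]
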